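/- Let v be a divisorial valuation on a Noetherian local domain (R, 𝔪) of dimension n that is analytically unramified, with v centered at 𝔪. Then vol(v) := lim_{m→∞} ℓ(R/𝔟_m(v))·n!/m^n > 0, where 𝔟_m(v) = {f ∈ R | v(f) ≥ m}. -/

import Mathlib

set_option synthInstance.maxHeartbeats 400000

open ENNReal

/-- The transcendence degree of a `k`-algebra `K`. -/
noncomputable def trdeg (k K : Type*) [CommRing k] [CommRing K] [Algebra k K] :
    Cardinal :=
  ⨆ s : {s : Set K // AlgebraicIndependent k ((↑) : s → K)}, Cardinal.mk s.1

/-- The length `ℓ(R/I)` of the quotient `R/I`. -/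
noncomputable def idealColength (R : Type*) [CommRing R] (I : Ideal R) : ℕ∞ :=
  WithBot.unbotD 0 (Order.krullDim (Submodule R (R ⧸ I)))

/-- The volume of a graded sequence of ideals in an `n`-dimensional ring:
`lim_m ℓ(R/𝔞_m)·n!/m^n`. -/
noncomputable def volSeq (R : Type*) [CommRing R] (n : ℕ) (a : ℕ → Ideal R) : ℝ≥0∞ :=
  Filter.atTop.limsup fun m : ℕ =>
    ENat.toENNReal (idealColength R (a m)) * (Nat.factorial n) / (m : ℝ≥0∞) ^ n

/-!
Pick `x ≠ 0` in `𝔪` and units `α_i` of `A` whose residues `t_1, …, t_{n-1}` are algebraically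
independent over the residue field `k` of `R`. Clearing the denominators of the `α_i` and
multiplying by `x` gives `z_0, …, z_{n-1} ∈ R`, all of the same valuation `D ≥ 1`, with `z_i / z_0`
of residue `t_i`. A monomial `z^a` then has valuation `D·|a|`, and its leading coefficient has
residue `w^|a| · t^(a_1, …, a_{n-1})` for a fixed `w ≠ 0`, so the leading coefficients of the
monomials of a given degree are `k`-linearly independent. Hence no monomial lies in `𝔟_m` plus the
ideal generated by the other monomials of at least its degree, and adding the `(q+1)^n` monomials
with exponents `≤ q` to `𝔟_m` one at a time, by decreasing degree, gives a strict chain of ideals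
as soon as `D·n·q < m`. Thus `ℓ(R/𝔟_m) ≥ (m/(D·n))^n`, which bounds `vol(v)` away from `0`.
-/

open IsLocalRing

theorem trdeg_eq_algebraTrdeg (k K : Type*) [CommRing k] [CommRing K] [Algebra k K] :
    trdeg k K = Algebra.trdeg k K := by
  unfold trdeg Algebra.trdeg AlgebraicIndepOn
  rfl

theorem exists_algebraicIndependent_of_trdeg_eq {k K : Type*} [Field k] [Field K] [Algebra k K]
    {n : ℕ} (h : trdeg k K = n) : ∃ t : Fin n → K, AlgebraicIndependent k t := by
  obtain ⟨s, hs⟩ := exists_isTranscendenceBasis k K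
  obtain ⟨e⟩ := Cardinal.mk_eq_nat_iff.mp
    (hs.cardinalMk_eq_trdeg.trans ((trdeg_eq_algebraTrdeg k K).symm.trans h))
  exact ⟨_, hs.1.comp e.symm e.symm.injective⟩

theorem IsLocalRing.exists_ne_zero_mem_maximalIdeal {R : Type*} [CommRing R] [IsLocalRing R]
    (h : 0 < ringKrullDim R) : ∃ x ∈ maximalIdeal R, x ≠ 0 := by
  refine (Submodule.ne_bot_iff _).mp fun hbot => h.ne' ?_
  exact ringKrullDim_eq_zero_of_isField (isField_iff_maximalIdeal_eq.mpr hbot)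

theorem AlgebraicIndependent.linearIndependent_prod_pow {ι k K : Type*} [Fintype ι] [CommRing k]
    [CommRing K] [Algebra k K] {t : ι → K} (ht : AlgebraicIndependent k t) :
    LinearIndependent k (fun d : ι → ℕ => ∏ i, t i ^ d i) := by
  have h := ((MvPolynomial.basisMonomials ι k).linearIndependent.map'
    (MvPolynomial.aeval t).toLinearMap (LinearMap.ker_eq_bot.mpr ht)).comp _
    Finsupp.equivFunOnFinite.symm.injective
  have heq : (MvPolynomial.aeval t).toLinearMap ∘ (MvPolynomial.basisMonomials ι k) ∘
      Finsupp.equivFunOnFinite.symm = fun d : ι → ℕ => ∏ i, t i ^ d i := by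
    funext d
    simp [MvPolynomial.aeval_monomial, Finsupp.prod_pow]
  rwa [Function.comp_assoc, heq] at h

section Colength

variable {R : Type*} [CommRing R]

theorem le_idealColength_of_ltSeries (I : Ideal R) (p : LTSeries (Ideal R)) (hp : p.head = I) :
    (p.length : ℕ∞) ≤ idealColength R I := by
  have hIp : ∀ i, I ≤ p i := fun i => hp ▸ p.monotone (Fin.zero_le i)
  let q : LTSeries (Submodule R (R ⧸ I)) :=
    ⟨p.length, fun i => (Submodule.comapMkQRelIso I).symm ⟨p i, hIp i⟩,
      fun i => (Submodule.comapMkQRelIso I).symm.lt_iff_lt.mpr (p.step i)⟩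
  have hq : ((p.length : ℕ∞) : WithBot ℕ∞) ≤ Order.krullDim (Submodule R (R ⧸ I)) := by
    exact_mod_cast Order.LTSeries.length_le_krullDim q
  unfold idealColength
  cases h : Order.krullDim (Submodule R (R ⧸ I)) with
  | bot => simp [h] at hq
  | coe d => exact_mod_cast (by simpa [h] using hq : ((p.length : ℕ∞) : WithBot ℕ∞) ≤ d)

theorem exists_ltSeries_sup_span {β : Type*} (I : Ideal R) (w : β → R) (deg : β → ℕ)
    (F : Finset β) (hw : ∀ a ∈ F, w a ∉ I ⊔ Ideal.span (w '' {b | deg a ≤ deg b ∧ b ≠ a})) :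
    ∃ p : LTSeries (Ideal R), p.length = F.card ∧ p.head = I ∧
      p.last = I ⊔ Ideal.span (w '' F) := by
  classical
  induction F using Finset.strongInduction with
  | _ F ih =>
    rcases F.eq_empty_or_nonempty with rfl | hne
    · exact ⟨RelSeries.singleton _ I, rfl, rfl, by simp⟩
    obtain ⟨a, haF, ha_min⟩ := F.exists_min_image deg hne
    obtain ⟨p, hlen, hhead, hlast⟩ :=
      ih (F.erase a) (F.erase_ssubset haF) fun b hb => hw b (F.mem_of_mem_erase hb)
    have hsub : (↑(F.erase a) : Set β) ⊆ {b | deg a ≤ deg b ∧ b ≠ a} := fun b hb => by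
      obtain ⟨hba, hbF⟩ := Finset.mem_erase.mp hb
      exact ⟨ha_min b hbF, hba⟩
    have hlt : p.last < I ⊔ Ideal.span (w '' F) := by
      rw [hlast]
      refine lt_of_le_of_ne (sup_le_sup_left (Ideal.span_mono
        (Set.image_mono (F.erase_subset a))) I) fun h => hw a haF ?_
      refine sup_le_sup_left (Ideal.span_mono (Set.image_mono hsub)) I ?_
      exact h ▸ Ideal.mem_sup_right (Ideal.subset_span ⟨a, haF, rfl⟩)
    refine ⟨p.snoc _ hlt, ?_, by simpa using hhead, by simp⟩
    simp [hlen, Finset.card_erase_add_one haF]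

theorem card_le_idealColength {β : Type*} (I : Ideal R) (w : β → R) (deg : β → ℕ)
    (F : Finset β) (hw : ∀ a ∈ F, w a ∉ I ⊔ Ideal.span (w '' {b | deg a ≤ deg b ∧ b ≠ a})) :
    (F.card : ℕ∞) ≤ idealColength R I := by
  obtain ⟨p, hlen, hhead, -⟩ := exists_ltSeries_sup_span I w deg F hw
  exact hlen ▸ le_idealColength_of_ltSeries I p hhead

end Colength

theorem volSeq_pos_of_pow_le_idealColength {R : Type*} [CommRing R] {n : ℕ} (a : ℕ → Ideal R)
    {C : ℕ} (hC : 0 < C)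
    (h : ∀ m q : ℕ, C * q < m → (((q + 1) ^ n : ℕ) : ℕ∞) ≤ idealColength R (a m)) :
    0 < volSeq R n a := by
  have hterm : ∀ m : ℕ, 1 ≤ m → ((C : ℝ≥0∞) ^ n)⁻¹ ≤
      ENat.toENNReal (idealColength R (a m)) * (Nat.factorial n) / (m : ℝ≥0∞) ^ n := by
    intro m hm
    have hq_lt := Nat.lt_mul_div_succ (m - 1) hC
    have hq_le := Nat.mul_div_le (m - 1) C
    generalize (m - 1) / C = q at hq_lt hq_le
    have hlen : (((q + 1) ^ n : ℕ) : ℝ≥0∞) ≤ ENat.toENNReal (idealColength R (a m)) := by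
      exact_mod_cast ENat.toENNReal_le.mpr (h m q (by omega))
    calc ((C : ℝ≥0∞) ^ n)⁻¹ ≤ (((q + 1) ^ n : ℕ) : ℝ≥0∞) / (m : ℝ≥0∞) ^ n := by
          rw [ENNReal.le_div_iff_mul_le (by simp) (by simp), mul_comm, ← div_eq_mul_inv,
            ENNReal.div_le_iff (by simp; omega) (by simp)]
          exact_mod_cast (Nat.pow_le_pow_left (by omega : m ≤ C * (q + 1)) n).trans_eq
            (by rw [mul_pow, mul_comm])
      _ ≤ ENat.toENNReal (idealColength R (a m)) * (Nat.factorial n) / (m : ℝ≥0∞) ^ n := by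
          gcongr
          exact hlen.trans (le_mul_of_one_le_right' (by exact_mod_cast Nat.factorial_pos n))
  refine lt_of_lt_of_le (ENNReal.inv_pos.mpr (by simp) : 0 < ((C : ℝ≥0∞) ^ n)⁻¹) ?_
  exact Filter.le_limsup_of_frequently_le (Filter.eventually_atTop.mpr ⟨1, hterm⟩).frequently

theorem map_prod_pow_of_map_eq {R A ι : Type*} [CommRing R] [CommRing A] [Fintype ι]
    (φ : R →+* A) {π : A} {D : ℕ} {z : ι → R} {W : ι → Aˣ} (hz : ∀ i, φ (z i) = W i * π ^ D)
    (a : ι → ℕ) :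
    φ (∏ i, z i ^ a i) = (∏ i, (W i : A) ^ a i) * π ^ (D * ∑ i, a i) := by
  simp only [map_prod, map_pow, hz, mul_pow, Finset.prod_mul_distrib, ← pow_mul,
    Finset.prod_pow_eq_pow_sum, Finset.mul_sum]

section InitialForms

variable {R A k : Type*} [CommRing R] [CommRing A] [IsLocalRing A] [Field k]
  [Algebra k (ResidueField A)]

def initialCoeffIdeal (φ : R →+* A)
    (hφ : ∀ r, residue A (φ r) ∈ Set.range (algebraMap k (ResidueField A)))
    (π : A) (j : ℕ) (V : Submodule k (ResidueField A)) : Ideal R where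
  carrier := {y | ∃ c : A, residue A c ∈ V ∧ π ^ (j + 1) ∣ φ y - π ^ j * c}
  zero_mem' := ⟨0, by simp⟩
  add_mem' := by
    rintro y y' ⟨c, hcV, hc⟩ ⟨c', hc'V, hc'⟩
    refine ⟨c + c', by simpa using V.add_mem hcV hc'V, ?_⟩
    convert dvd_add hc hc' using 1
    simp only [map_add]
    ring
  smul_mem' := by
    rintro r y ⟨c, hcV, hc⟩
    obtain ⟨s, hs⟩ := hφ r
    refine ⟨φ r * c, ?_, ?_⟩
    · rw [map_mul, ← hs, ← Algebra.smul_def]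
      exact V.smul_mem s hcV
    · convert dvd_mul_of_dvd_right hc (φ r) using 1
      simp only [smul_eq_mul, map_mul]
      ring

theorem linearIndepOn_residue_prod_pow {n : ℕ} {t : Fin n → ResidueField A}
    (ht : AlgebraicIndependent k t) {W : Fin (n + 1) → Aˣ}
    (hW : ∀ i, residue A (W i.succ) = t i * residue A (W 0)) (j : ℕ) :
    LinearIndepOn k (fun a : Fin (n + 1) → ℕ => residue A (∏ i, (W i : A) ^ a i))
      {a | ∑ i, a i = j} := by
  set w := residue A (W 0)
  have hres : ∀ a : Fin (n + 1) → ℕ,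
      residue A (∏ i, (W i : A) ^ a i) = w ^ (∑ i, a i) * ∏ i, t i ^ Fin.tail a i := by
    intro a
    rw [map_prod, Fin.prod_univ_succ, Fin.sum_univ_succ]
    simp only [map_pow, hW, mul_pow, Finset.prod_mul_distrib, Finset.prod_pow_eq_pow_sum, Fin.tail,
      pow_add, w]
    ring
  have htail : Set.InjOn Fin.tail {a : Fin (n + 1) → ℕ | ∑ i, a i = j} := by
    intro a ha b hb hab
    rw [← Fin.cons_self_tail a, ← Fin.cons_self_tail b, hab]
    simp only [Set.mem_ofPred_eq, Fin.sum_univ_succ] at ha hb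
    have : a 0 = b 0 := by
      have := congrArg (fun f => ∑ i, f i) hab
      simp only [Fin.tail] at this
      omega
    rw [this]
  have hw : w ^ j ≠ 0 := pow_ne_zero _ ((residue_ne_zero_iff_isUnit _).mpr (W 0).isUnit)
  have hmul : Function.Injective (LinearMap.mulLeft k (w ^ j)) := mul_right_injective₀ hw
  refine ((ht.linearIndependent_prod_pow.linearIndepOn _).comp_of_image htail).map_injOn
    (LinearMap.mulLeft k (w ^ j)) hmul.injOn |>.congr fun a ha => ?_
  simp [hres, show ∑ i, a i = j from ha]

end InitialForms

section DiscreteValuationRing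

variable {R A k : Type*} [CommRing R] [CommRing A] [IsDomain A] [IsDiscreteValuationRing A]
  [Field k] [Algebra k (ResidueField A)]

theorem prod_pow_notMem_comap_sup_span {ι : Type*} [Fintype ι] (φ : R →+* A)
    (hφ : ∀ r, residue A (φ r) ∈ Set.range (algebraMap k (ResidueField A)))
    {π : A} (hπ : Irreducible π) {D : ℕ} (hD : 0 < D) {z : ι → R} {W : ι → Aˣ}
    (hz : ∀ i, φ (z i) = W i * π ^ D) {a₀ : ι → ℕ}
    (hW : LinearIndepOn k (fun a : ι → ℕ => residue A (∏ i, (W i : A) ^ a i))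
      {a | ∑ i, a i = ∑ i, a₀ i})
    {m : ℕ} (hm : D * ∑ i, a₀ i < m) :
    ∏ i, z i ^ a₀ i ∉ (maximalIdeal A ^ m).comap φ ⊔
      Ideal.span ((fun a => ∏ i, z i ^ a i) '' {a | ∑ i, a₀ i ≤ ∑ i, a i ∧ a ≠ a₀}) := by
  set j := D * ∑ i, a₀ i
  set Ω := fun a : ι → ℕ => ∏ i, (W i : A) ^ a i
  set s := {a : ι → ℕ | ∑ i, a i = ∑ i, a₀ i}
  have hmax := (IsDiscreteValuationRing.irreducible_iff_uniformizer π).mp hπ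
  have hpow : ∀ n, maximalIdeal A ^ n = Ideal.span {π ^ n} := fun n => by
    rw [hmax, Ideal.span_singleton_pow]
  -- Everything on the left has an order-`j` leading coefficient in the span of the residues of the
  -- other degree-`|a₀|` monomials; by linear independence, `z ^ a₀` does not.
  have hle : (maximalIdeal A ^ m).comap φ ⊔
      Ideal.span ((fun a => ∏ i, z i ^ a i) '' {a | ∑ i, a₀ i ≤ ∑ i, a i ∧ a ≠ a₀}) ≤
      initialCoeffIdeal φ hφ π j (Submodule.span k ((residue A ∘ Ω) '' (s \ {a₀}))) := by
    refine sup_le (fun y hy => ⟨0, zero_mem _, ?_⟩) ?_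
    · rw [Ideal.mem_comap, hpow, Ideal.mem_span_singleton] at hy
      simpa using (pow_dvd_pow π hm).trans hy
    rw [Ideal.span_le]
    rintro _ ⟨a, ⟨hdeg, hne⟩, rfl⟩
    rcases hdeg.eq_or_lt with heq | hlt
    · refine ⟨Ω a, Submodule.subset_span ⟨a, ⟨heq.symm, hne⟩, rfl⟩, ?_⟩
      simp [map_prod_pow_of_map_eq φ hz, j, Ω, heq, mul_comm]
    · refine ⟨0, zero_mem _, ?_⟩
      rw [mul_zero, sub_zero, map_prod_pow_of_map_eq φ hz]
      refine (pow_dvd_pow π ?_).mul_left _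
      have : D * (∑ i, a₀ i + 1) ≤ D * ∑ i, a i := Nat.mul_le_mul_left D hlt
      rw [mul_add_one] at this
      omega
  intro hmem
  obtain ⟨c, hcV, hc⟩ := hle hmem
  have hΩc : π ∣ Ω a₀ - c := by
    rw [map_prod_pow_of_map_eq φ hz] at hc
    change π ^ (j + 1) ∣ Ω a₀ * π ^ j - π ^ j * c at hc
    rw [mul_comm (Ω a₀), ← mul_sub, pow_succ] at hc
    exact (mul_dvd_mul_iff_left (pow_ne_zero j hπ.ne_zero)).mp hc
  have hres : residue A (Ω a₀) = residue A c := by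
    rw [← sub_eq_zero, ← map_sub, residue_eq_zero_iff, hmax]
    exact Ideal.mem_span_singleton.mpr hΩc
  exact hW.notMem_span rfl (hres ▸ hcV)

theorem pow_card_le_idealColength_comap {ι : Type*} [Fintype ι] (φ : R →+* A)
    (hφ : ∀ r, residue A (φ r) ∈ Set.range (algebraMap k (ResidueField A)))
    {π : A} (hπ : Irreducible π) {D : ℕ} (hD : 0 < D) {z : ι → R} {W : ι → Aˣ}
    (hz : ∀ i, φ (z i) = W i * π ^ D)
    (hW : ∀ j, LinearIndepOn k (fun a : ι → ℕ => residue A (∏ i, (W i : A) ^ a i))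
      {a | ∑ i, a i = j})
    {m q : ℕ} (hm : D * (Fintype.card ι * q) < m) :
    (((q + 1) ^ Fintype.card ι : ℕ) : ℕ∞) ≤ idealColength R ((maximalIdeal A ^ m).comap φ) := by
  classical
  have hdeg : ∀ a ∈ Fintype.piFinset fun _ : ι => Finset.range (q + 1),
      ∑ i, a i ≤ Fintype.card ι * q := fun a ha => by
    have hle : ∀ i, a i ≤ q := fun i => by
      simpa [Nat.lt_succ_iff] using Fintype.mem_piFinset.mp ha i
    simpa using Finset.sum_le_sum fun i (_ : i ∈ Finset.univ) => hle i
  simpa using card_le_idealColength _ _ _ _ fun a ha =>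
    prod_pow_notMem_comap_sup_span φ hφ hπ hD hz (hW _)
      (lt_of_le_of_lt (Nat.mul_le_mul_left D (hdeg a ha)) hm)

end DiscreteValuationRing

theorem ValuationSubring.exists_unit_mul_pow_eq {R K : Type*} [CommRing R] [IsDomain R] [Field K]
    [Algebra R K] [IsFractionRing R K] {A : ValuationSubring K} [IsDiscreteValuationRing A]
    (φ : R →+* A) (hφ : ∀ r, (φ r : K) = algebraMap R K r) {π : A} (hπ : Irreducible π)
    {x : R} (hx0 : x ≠ 0) (hx : φ x ∈ maximalIdeal A) {n : ℕ} (t : Fin n → ResidueField A)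
    (ht : ∀ i, t i ≠ 0) :
    ∃ (z : Fin (n + 1) → R) (W : Fin (n + 1) → Aˣ) (D : ℕ), 0 < D ∧
      (∀ i, φ (z i) = W i * π ^ D) ∧ ∀ i, residue A (W i.succ) = t i * residue A (W 0) := by
  have hα : ∀ i, ∃ α : Aˣ, residue A α = t i := fun i => by
    obtain ⟨a, ha⟩ := residue_surjective (t i)
    obtain ⟨α, rfl⟩ := (residue_ne_zero_iff_isUnit a).mp (ha ▸ ht i)
    exact ⟨α, ha⟩
  choose α hα using hα
  obtain ⟨b, hb⟩ := IsLocalization.exist_integer_multiples_of_finite (nonZeroDivisors R)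
    fun i => ((α i : A) : K)
  choose f hf using hb
  have hφf : ∀ i, φ (f i) = φ b * α i := fun i => Subtype.ext <| by
    simp [hφ, hf, Algebra.smul_def]
  have hxb : φ (x * b) ≠ 0 := fun h => mul_ne_zero hx0 (nonZeroDivisors.ne_zero b.2) <|
    IsFractionRing.injective R K (by rw [← hφ, h, map_zero, ZeroMemClass.coe_zero])
  obtain ⟨D, u, hu⟩ := IsDiscreteValuationRing.eq_unit_mul_pow_irreducible hxb hπ
  refine ⟨Fin.cons (x * b) fun i => x * f i, Fin.cons u fun i => α i * u, D, ?_, ?_, ?_⟩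
  · refine Nat.pos_of_ne_zero fun hD => notMem_maximalIdeal.mpr u.isUnit ?_
    rw [← mul_one (u : A), ← pow_zero π, ← hD, ← hu, map_mul]
    exact Ideal.mul_mem_right _ _ hx
  · intro i
    cases i using Fin.cases with
    | zero => exact hu
    | succ i =>
      rw [Fin.cons_succ, Fin.cons_succ, map_mul, hφf, ← mul_assoc, ← map_mul, hu, Units.val_mul]
      ring
  · simp [hα]

theorem stmt_18_general {R : Type*} [CommRing R] [IsDomain R] [IsLocalRing R]
    (n : ℕ) (hn : 1 ≤ n) (hdim : ringKrullDim R = n)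
    (A : ValuationSubring (FractionRing R))
    (hRA : ∀ r : R, algebraMap R (FractionRing R) r ∈ A)
    (hdvr : IsDiscreteValuationRing A)
    (hcenter : ∀ r : R,
      ((⟨algebraMap R (FractionRing R) r, hRA r⟩ : A) ∈ IsLocalRing.maximalIdeal A ↔
        r ∈ IsLocalRing.maximalIdeal R))
    (ρ : IsLocalRing.ResidueField R →+* IsLocalRing.ResidueField A)
    (hρ : ∀ r : R, ρ (IsLocalRing.residue R r) =
      IsLocalRing.residue A (⟨algebraMap R (FractionRing R) r, hRA r⟩ : A))
    (hdivisorial : @trdeg (IsLocalRing.ResidueField R) (IsLocalRing.ResidueField A)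
      _ _ ρ.toAlgebra = ((n - 1 : ℕ) : Cardinal))
    (b : ℕ → Ideal R)
    (hb : ∀ (m : ℕ) (f : R), f ∈ b m ↔
      (⟨algebraMap R (FractionRing R) f, hRA f⟩ : A) ∈
        (IsLocalRing.maximalIdeal A) ^ m) :
    0 < volSeq R n b := by
  obtain ⟨n, rfl⟩ := Nat.exists_eq_add_of_le' hn
  let := ρ.toAlgebra
  let φ : R →+* A := (algebraMap R (FractionRing R)).codRestrict A hRA
  obtain ⟨t, ht⟩ := exists_algebraicIndependent_of_trdeg_eq hdivisorial
  obtain ⟨x, hxm, hx0⟩ :=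
    exists_ne_zero_mem_maximalIdeal (R := R) (by rw [hdim]; exact_mod_cast n.succ_pos)
  obtain ⟨π, hπ⟩ := IsDiscreteValuationRing.exists_irreducible A
  obtain ⟨z, W, D, hD, hz, hW⟩ := ValuationSubring.exists_unit_mul_pow_eq φ (fun _ => rfl) hπ hx0
    ((hcenter x).mpr hxm) t ht.ne_zero
  obtain rfl : b = fun m => (maximalIdeal A ^ m).comap φ := funext fun m => Ideal.ext (hb m)
  refine volSeq_pos_of_pow_le_idealColength _ (C := D * (n + 1)) (by positivity) fun m q hm => ?_
  simpa using pow_card_le_idealColength_comap φ (fun r => ⟨_, hρ r⟩) hπ hD hz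
    (linearIndepOn_residue_prod_pow ht hW) (by simpa [mul_assoc] using hm)

/-- Izumi-type positivity of the volume: let `(R, 𝔪)` be an `n`-dimensional Noetherian
local domain which is analytically unramified, and let `v` be a divisorial valuation of
`R` centered at `𝔪`, i.e. given by a discrete valuation subring `A` of `Frac(R)`
containing `R`, whose maximal ideal contracts to `𝔪`, and whose residue field has
transcendence degree `n − 1` over the residue field of `R`.  Then
`vol(v) = lim_m ℓ(R/𝔟_m(v))·n!/m^n > 0`, where `𝔟_m(v) = {f ∈ R | v(f) ≥ m}`. -/
theorem stmt_18 {R : Type*} [CommRing R] [IsDomain R] [IsLocalRing R]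
    [IsNoetherianRing R]
    (n : ℕ) (hn : 1 ≤ n) (hdim : ringKrullDim R = n)
    (hur : IsDomain (AdicCompletion (IsLocalRing.maximalIdeal R) R))
    (A : ValuationSubring (FractionRing R))
    (hRA : ∀ r : R, algebraMap R (FractionRing R) r ∈ A)
    (hdvr : IsDiscreteValuationRing A)
    (hcenter : ∀ r : R,
      ((⟨algebraMap R (FractionRing R) r, hRA r⟩ : A) ∈ IsLocalRing.maximalIdeal A ↔
        r ∈ IsLocalRing.maximalIdeal R))
    (ρ : IsLocalRing.ResidueField R →+* IsLocalRing.ResidueField A)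
    (hρ : ∀ r : R, ρ (IsLocalRing.residue R r) =
      IsLocalRing.residue A (⟨algebraMap R (FractionRing R) r, hRA r⟩ : A))
    (hdivisorial : @trdeg (IsLocalRing.ResidueField R) (IsLocalRing.ResidueField A)
      _ _ ρ.toAlgebra = ((n - 1 : ℕ) : Cardinal))
    (b : ℕ → Ideal R)
    (hb : ∀ (m : ℕ) (f : R), f ∈ b m ↔
      (⟨algebraMap R (FractionRing R) f, hRA f⟩ : A) ∈
        (IsLocalRing.maximalIdeal A) ^ m) :
    0 < volSeq R n b :=
  stmt_18_general n hn hdim A hRA hdvr hcenter ρ hρ hdivisorial b hb
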